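/- arXiv:1902.02154 — 2 statements merged into one kernel-verified Lean document; each statement's English description precedes it below -/
import Mathlib

section
/- The enveloping group of the dihedral quandle R_{2n} is generated by the images a_0, a_1 of x_0, x_1 and has defining relations [a_0, a_1²] = [a_0², a_1] = [a_0, (a_0 a_1)^n] = [a_1, (a_0 a_1)^n] = 1; moreover the image of x_{2r+ε} (ε ∈ {0,1}, 0 ≤ r ≤ n−1) equals (a_0 a_1)^{-r} a_ε (a_0 a_1)^r. -/
open Quandles
open scoped commutatorElement

/-- The image `a_k` of the element `x_k` of the dihedral quandle `R_{2n}`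
in its enveloping group. -/
def dihedralGen (n : ℕ) (k : ℕ) : Rack.EnvelGroup (Quandle.Dihedral (2 * n)) :=
  Rack.toEnvelGroup (Quandle.Dihedral (2 * n)) ((k : ZMod (2 * n)) : Quandle.Dihedral (2 * n))

/-!
In the enveloping group, `a_{x+2} = c⁻¹ a_x c` with `c = a_0 a_1`, so every generator is a
conjugate of `a_0` or `a_1` by a power of `c`; the squares `a_x²` are central because the
dihedral quandle is involutory, and `c^n` commutes with every `a_x` because `a_{x+2n} = a_x`.
Conversely, for `b₀, b₁` satisfying the relations, `k ↦ (b₀b₁)^{-s} b_ε (b₀b₁)^s`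
(`k = 2s + ε`) is `2n`-periodic and turns `k ↦ 2i - k` into conjugation by the image of `i`,
hence defines a quandle homomorphism into `Conj H`; the universal property of the enveloping
group lifts it, uniquely since `a_0, a_1` generate.
-/

theorem apply_add_zsmul_eq_conj {A G : Type*} [AddCommGroup A] [Group G] {f : A → G} {a : A}
    {c : G} (h : ∀ x, f (x + a) = c⁻¹ * f x * c) (x : A) (r : ℤ) :
    f (x + r • a) = (c ^ r)⁻¹ * f x * c ^ r := by
  induction r using Int.induction_on generalizing x with
  | zero => simp
  | succ r ih =>
    rw [add_zsmul, one_zsmul, add_comm _ a, ← add_assoc, ih, h, zpow_add_one]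
    group
  | pred r ih =>
    have h' : f (x - a) = c * f x * c⁻¹ := by
      rw [← sub_add_cancel x a, h, add_sub_cancel_right]; group
    rw [show x + (-r - 1 : ℤ) • a = x - a + (-r : ℤ) • a by rw [sub_zsmul, one_zsmul]; abel, ih,
      h', zpow_sub_one]
    group

theorem conj_zpow_conj_of_conj_eq_inv_mul {G : Type*} [Group G] {c d z x : G}
    (hc : c * d * c⁻¹ = d⁻¹ * z) (hzd : Commute z d) (hzx : Commute z (c * x * c⁻¹)) (s : ℤ) :
    c * (d ^ (-s) * x * d ^ s) * c⁻¹ = d ^ s * (c * x * c⁻¹) * d ^ (-s) := by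
  have hpow (k : ℤ) : c * d ^ k * c⁻¹ = d ^ (-k) * z ^ k := by
    rw [← conj_zpow, hc, (hzd.inv_right.symm).mul_zpow, inv_zpow']
  have hz : Commute (z ^ (-s)) (c * x * c⁻¹ * d ^ (-s)) :=
    (hzx.mul_right (hzd.zpow_right _)).zpow_left _
  calc c * (d ^ (-s) * x * d ^ s) * c⁻¹
      = (c * d ^ (-s) * c⁻¹) * (c * x * c⁻¹) * (c * d ^ s * c⁻¹) := by group
    _ = d ^ s * (z ^ (-s) * (c * x * c⁻¹ * d ^ (-s))) * z ^ s := by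
      rw [hpow, hpow, neg_neg]; group
    _ = d ^ s * (c * x * c⁻¹) * d ^ (-s) := by rw [hz.eq]; group

theorem exists_eq_add_two_mul (k : ℤ) : ∃ ε s : ℤ, (ε = 0 ∨ ε = 1) ∧ k = ε + 2 * s :=
  ⟨k % 2, k / 2, Int.emod_two_eq_zero_or_one k, (Int.emod_add_mul_ediv k 2).symm⟩

theorem Function.Periodic.apply_intCast_cast {α : Type*} {f : ℤ → α} {n : ℕ}
    (h : Function.Periodic f n) (k : ℤ) : f ((k : ZMod n).cast : ℤ) = f k := by
  obtain ⟨t, ht⟩ :=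
    (ZMod.intCast_eq_intCast_iff_dvd_sub _ _ n).mp (ZMod.intCast_zmod_cast (k : ZMod n))
  rw [show ((k : ZMod n).cast : ℤ) = k - t * n by linarith]
  simpa using (h.int_mul t).sub_eq k

namespace Rack

variable {R : Type*} [Rack R]

theorem closure_range_toEnvelGroup :
    Subgroup.closure (Set.range (toEnvelGroup R : R → EnvelGroup R)) = ⊤ := by
  refine eq_top_iff.mpr fun g _ => Quotient.inductionOn g fun a => ?_
  induction a with
  | unit => exact one_mem _
  | incl x => exact Subgroup.subset_closure ⟨x, rfl⟩
  | mul a b iha ihb => exact mul_mem iha ihb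
  | inv a iha => exact inv_mem iha

theorem commute_toEnvelGroup_sq (h : IsInvolutory R) (x y : R) :
    Commute ((toEnvelGroup R x : EnvelGroup R) ^ 2) (toEnvelGroup R y) := by
  have hxy := (toEnvelGroup R).map_act (x := x) (y := x ◃ y)
  rw [h x y, Quandle.conj_act_eq_conj, (toEnvelGroup R).map_act,
    Quandle.conj_act_eq_conj] at hxy
  rw [Commute, SemiconjBy, ← mul_inv_eq_iff_eq_mul, pow_two]
  simpa [mul_assoc] using hxy.symm

end Rack

namespace Quandle.Dihedral

open Rack

variable {m : ℕ}

def envelGen (x : ZMod m) : EnvelGroup (Dihedral m) :=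
  toEnvelGroup (Dihedral m) x

theorem envelGen_two_mul_sub (x y : ZMod m) :
    envelGen (2 * x - y) = envelGen x * envelGen y * (envelGen x)⁻¹ :=
  (toEnvelGroup (Dihedral m)).map_act (x := x) (y := y)

theorem inv_mul_envelGen_mul (x y : ZMod m) :
    (envelGen x)⁻¹ * envelGen y * envelGen x = envelGen (2 * x - y) := by
  have h := envelGen_two_mul_sub x (2 * x - y)
  rw [sub_sub_cancel] at h
  rw [h]; group

theorem envelGen_add_two (x : ZMod m) :
    envelGen (x + 2) = (envelGen 0 * envelGen 1)⁻¹ * envelGen x * (envelGen 0 * envelGen 1) := by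
  calc envelGen (x + 2)
      = (envelGen 1)⁻¹ * ((envelGen 0)⁻¹ * envelGen x * envelGen 0) * envelGen 1 := by
        rw [inv_mul_envelGen_mul, inv_mul_envelGen_mul]; congr 1; ring
    _ = _ := by group

theorem envelGen_add_two_mul (x : ZMod m) (r : ℤ) :
    envelGen (x + 2 * (r : ZMod m)) =
      ((envelGen 0 * envelGen 1) ^ r)⁻¹ * envelGen x * (envelGen 0 * envelGen 1) ^ r := by
  rw [mul_comm, ← zsmul_eq_mul]
  exact apply_add_zsmul_eq_conj envelGen_add_two x r

theorem closure_envelGen_zero_one :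
    Subgroup.closure {envelGen (m := m) 0, envelGen 1} = ⊤ := by
  rw [eq_top_iff, ← closure_range_toEnvelGroup, Subgroup.closure_le]
  rintro _ ⟨x, rfl⟩
  obtain ⟨k, rfl⟩ := ZMod.intCast_surjective x
  obtain ⟨ε, s, hε, rfl⟩ := exists_eq_add_two_mul k
  have hc : envelGen (m := m) 0 * envelGen 1 ∈ Subgroup.closure {envelGen 0, envelGen 1} :=
    mul_mem (Subgroup.subset_closure (by simp)) (Subgroup.subset_closure (by simp))
  have hε' : envelGen ((ε : ℤ) : ZMod m) ∈ Subgroup.closure {envelGen 0, envelGen 1} := by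
    rcases hε with rfl | rfl <;> exact Subgroup.subset_closure (by simp)
  change envelGen _ ∈ _
  rw [Int.cast_add, Int.cast_mul, Int.cast_two, envelGen_add_two_mul]
  exact mul_mem (mul_mem (inv_mem (zpow_mem hc _)) hε') (zpow_mem hc _)

theorem commute_envelGen_sq (x y : ZMod m) : Commute (envelGen x ^ 2) (envelGen y) :=
  commute_toEnvelGroup_sq (R := Dihedral m) (fun x => dihedralAct.inv m x) x y

theorem commute_envelGen_pow (n : ℕ) (x : ZMod (2 * n)) :
    Commute (envelGen x) ((envelGen 0 * envelGen 1) ^ n) := by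
  have h := envelGen_add_two_mul x n
  rw [show 2 * ((n : ℤ) : ZMod (2 * n)) = 0 by exact_mod_cast ZMod.natCast_self (2 * n),
    add_zero, zpow_natCast, mul_assoc, eq_inv_mul_iff_mul_eq] at h
  exact h.symm

end Quandle.Dihedral

open Quandle.Dihedral in
theorem dihedralGen_two_mul_add (n r ε : ℕ) :
    dihedralGen n (2 * r + ε) =
      ((envelGen 0 * envelGen 1) ^ r)⁻¹ * dihedralGen n ε * (envelGen 0 * envelGen 1) ^ r := by
  have h := envelGen_add_two_mul (ε : ZMod (2 * n)) r
  simp only [zpow_natCast, Int.cast_natCast] at h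
  simpa [dihedralGen, envelGen, add_comm] using h

section DihedralWord

variable {G : Type*} [Group G] (b₀ b₁ : G)

/-- The prospective image of `x_k` under `a_0 ↦ b₀`, `a_1 ↦ b₁`, read off from
`a_{2s+ε} = (a_0 a_1)^{-s} a_ε (a_0 a_1)^s`. -/
def dihedralWord (k : ℤ) : G :=
  (b₀ * b₁) ^ (-(k / 2)) * (if k % 2 = 0 then b₀ else b₁) * (b₀ * b₁) ^ (k / 2)

theorem dihedralWord_zero : dihedralWord b₀ b₁ 0 = b₀ := by simp [dihedralWord]

theorem dihedralWord_one : dihedralWord b₀ b₁ 1 = b₁ := by simp [dihedralWord]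

theorem dihedralWord_add_two_mul (k s : ℤ) :
    dihedralWord b₀ b₁ (k + 2 * s) = (b₀ * b₁) ^ (-s) * dihedralWord b₀ b₁ k * (b₀ * b₁) ^ s := by
  rw [dihedralWord, dihedralWord, show (k + 2 * s) / 2 = k / 2 + s by omega,
    show (k + 2 * s) % 2 = k % 2 by omega, neg_add, zpow_add, zpow_add]
  group

variable {b₀ b₁}

theorem Commute.dihedralWord {z : G} (h₀ : Commute z b₀) (h₁ : Commute z b₁) (k : ℤ) :
    Commute z (dihedralWord b₀ b₁ k) := by
  have hd := h₀.mul_right h₁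
  refine ((hd.zpow_right _).mul_right ?_).mul_right (hd.zpow_right _)
  split_ifs
  exacts [h₀, h₁]

theorem dihedralWord_periodic {n : ℕ} (h₀ : Commute b₀ ((b₀ * b₁) ^ n))
    (h₁ : Commute b₁ ((b₀ * b₁) ^ n)) :
    Function.Periodic (dihedralWord b₀ b₁) (2 * n : ℕ) := fun k => by
  rw [Nat.cast_mul, Nat.cast_two, dihedralWord_add_two_mul, zpow_neg, zpow_natCast, mul_assoc,
    ← ((h₀.symm.dihedralWord h₁.symm) k).eq, inv_mul_cancel_left]

variable (h₀₁ : Commute b₀ (b₁ ^ 2))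
include h₀₁

theorem mul_dihedralWord_mul_inv_of_le_one {ε η : ℤ} (hε : ε = 0 ∨ ε = 1) (hη : η = 0 ∨ η = 1) :
    dihedralWord b₀ b₁ ε * dihedralWord b₀ b₁ η * (dihedralWord b₀ b₁ ε)⁻¹ =
      dihedralWord b₀ b₁ (2 * ε - η) := by
  rcases hε with rfl | rfl <;> rcases hη with rfl | rfl <;> norm_num [dihedralWord]
  calc b₁ * b₀ * b₁⁻¹ = b₁⁻¹ * (b₁ ^ 2 * b₀) * b₁⁻¹ := by group
    _ = b₁⁻¹ * (b₀ * b₁) := by rw [← h₀₁.eq]; group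

variable (h₁₀ : Commute (b₀ ^ 2) b₁)
include h₁₀

theorem mul_dihedralWord_mul_inv {ε : ℤ} (hε : ε = 0 ∨ ε = 1) (k : ℤ) :
    dihedralWord b₀ b₁ ε * dihedralWord b₀ b₁ k * (dihedralWord b₀ b₁ ε)⁻¹ =
      dihedralWord b₀ b₁ (2 * ε - k) := by
  obtain ⟨η, s, hη, rfl⟩ := exists_eq_add_two_mul k
  -- Conjugation by `b_ε` inverts `b₀ * b₁` up to the element `b₀ ^ 2 * b₁ ^ 2`, which is central.
  have hz₀ : Commute (b₀ ^ 2 * b₁ ^ 2) b₀ := ((Commute.refl b₀).pow_left 2).mul_left h₀₁.symm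
  have hz₁ : Commute (b₀ ^ 2 * b₁ ^ 2) b₁ := h₁₀.mul_left ((Commute.refl b₁).pow_left 2)
  have hd : (b₀ * b₁)⁻¹ * (b₀ ^ 2 * b₁ ^ 2) = b₁ * b₀ := by
    calc (b₀ * b₁)⁻¹ * (b₀ ^ 2 * b₁ ^ 2) = b₁⁻¹ * (b₀ * b₁ ^ 2) := by group
      _ = b₁ * b₀ := by rw [h₀₁.eq]; group
  have hc : dihedralWord b₀ b₁ ε * (b₀ * b₁) * (dihedralWord b₀ b₁ ε)⁻¹ =
      (b₀ * b₁)⁻¹ * (b₀ ^ 2 * b₁ ^ 2) := by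
    rw [hd]
    rcases hε with rfl | rfl
    · rw [dihedralWord_zero, ← mul_assoc, ← pow_two, h₁₀.eq]; group
    · rw [dihedralWord_one]; group
  have hzη : Commute (b₀ ^ 2 * b₁ ^ 2)
      (dihedralWord b₀ b₁ ε * dihedralWord b₀ b₁ η * (dihedralWord b₀ b₁ ε)⁻¹) := by
    rw [mul_dihedralWord_mul_inv_of_le_one h₀₁ hε hη]
    exact hz₀.dihedralWord hz₁ _
  calc dihedralWord b₀ b₁ ε * dihedralWord b₀ b₁ (η + 2 * s) * (dihedralWord b₀ b₁ ε)⁻¹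
      = (b₀ * b₁) ^ s * dihedralWord b₀ b₁ (2 * ε - η) * (b₀ * b₁) ^ (-s) := by
        rw [dihedralWord_add_two_mul, conj_zpow_conj_of_conj_eq_inv_mul hc (hz₀.mul_right hz₁) hzη,
          mul_dihedralWord_mul_inv_of_le_one h₀₁ hε hη]
    _ = dihedralWord b₀ b₁ (2 * ε - (η + 2 * s)) := by
        rw [show 2 * ε - (η + 2 * s) = 2 * ε - η + 2 * -s by ring, dihedralWord_add_two_mul,
          neg_neg]

theorem dihedralWord_two_mul_sub (i j : ℤ) :
    dihedralWord b₀ b₁ (2 * i - j) =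
      dihedralWord b₀ b₁ i * dihedralWord b₀ b₁ j * (dihedralWord b₀ b₁ i)⁻¹ := by
  obtain ⟨ε, s, hε, rfl⟩ := exists_eq_add_two_mul i
  calc dihedralWord b₀ b₁ (2 * (ε + 2 * s) - j)
      = (b₀ * b₁) ^ (-s) * dihedralWord b₀ b₁ (2 * ε - (j + 2 * -s)) * (b₀ * b₁) ^ s := by
        rw [← dihedralWord_add_two_mul]; congr 1; ring
    _ = (b₀ * b₁) ^ (-s) *
          (dihedralWord b₀ b₁ ε * dihedralWord b₀ b₁ (j + 2 * -s) * (dihedralWord b₀ b₁ ε)⁻¹) *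
            (b₀ * b₁) ^ s := by
        rw [mul_dihedralWord_mul_inv h₀₁ h₁₀ hε]
    _ = _ := by rw [dihedralWord_add_two_mul, dihedralWord_add_two_mul, neg_neg]; group

end DihedralWord

namespace Quandle.Dihedral

open Rack

variable {H : Type*} [Group H] {b₀ b₁ : H}

def toConjOfCommute {n : ℕ} (h₀₁ : Commute b₀ (b₁ ^ 2)) (h₁₀ : Commute (b₀ ^ 2) b₁)
    (h₀ : Commute b₀ ((b₀ * b₁) ^ n)) (h₁ : Commute b₁ ((b₀ * b₁) ^ n)) :
    Dihedral (2 * n) →◃ Conj H where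
  toFun x := dihedralWord b₀ b₁ ((x : ZMod (2 * n)).cast : ℤ)
  map_act' {x y} := by
    obtain ⟨i, rfl⟩ := ZMod.intCast_surjective (x : ZMod (2 * n))
    obtain ⟨j, rfl⟩ := ZMod.intCast_surjective (y : ZMod (2 * n))
    have hW := (dihedralWord_periodic h₀ h₁).apply_intCast_cast
    change dihedralWord b₀ b₁ ((2 * (i : ZMod (2 * n)) - j : ZMod (2 * n)).cast : ℤ) = _
    rw [Quandle.conj_act_eq_conj,
      show 2 * (i : ZMod (2 * n)) - j = ((2 * i - j : ℤ) : ZMod (2 * n)) by push_cast; ring,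
      hW, hW, hW, dihedralWord_two_mul_sub h₀₁ h₁₀]

theorem existsUnique_envelGroup_hom {n : ℕ} (h₀₁ : Commute b₀ (b₁ ^ 2))
    (h₁₀ : Commute (b₀ ^ 2) b₁) (h₀ : Commute b₀ ((b₀ * b₁) ^ n))
    (h₁ : Commute b₁ ((b₀ * b₁) ^ n)) :
    ∃! φ : EnvelGroup (Dihedral (2 * n)) →* H, φ (envelGen 0) = b₀ ∧ φ (envelGen 1) = b₁ := by
  have hW := (dihedralWord_periodic h₀ h₁).apply_intCast_cast
  set φ := toEnvelGroup.map (toConjOfCommute h₀₁ h₁₀ h₀ h₁)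
  have hφ₀ : φ (envelGen 0) = b₀ := by
    change dihedralWord b₀ b₁ ((0 : ZMod (2 * n)).cast) = b₀
    rw [← Int.cast_zero, hW, dihedralWord_zero]
  have hφ₁ : φ (envelGen 1) = b₁ := by
    change dihedralWord b₀ b₁ ((1 : ZMod (2 * n)).cast) = b₁
    rw [← Int.cast_one, hW, dihedralWord_one]
  refine ⟨φ, ⟨hφ₀, hφ₁⟩, fun ψ ⟨hψ₀, hψ₁⟩ => ?_⟩
  refine MonoidHom.eq_of_eqOn_dense closure_envelGen_zero_one ?_
  rintro _ (rfl | rfl)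
  exacts [hψ₀.trans hφ₀.symm, hψ₁.trans hφ₁.symm]

end Quandle.Dihedral

open Quandle.Dihedral in
theorem envelGroup_dihedral_presentation_general (n : ℕ) :
    Subgroup.closure {dihedralGen n 0, dihedralGen n 1} = ⊤ ∧
    ⁅dihedralGen n 0, (dihedralGen n 1) ^ 2⁆ = 1 ∧
    ⁅(dihedralGen n 0) ^ 2, dihedralGen n 1⁆ = 1 ∧
    ⁅dihedralGen n 0, (dihedralGen n 0 * dihedralGen n 1) ^ n⁆ = 1 ∧
    ⁅dihedralGen n 1, (dihedralGen n 0 * dihedralGen n 1) ^ n⁆ = 1 ∧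
    (∀ r ε : ℕ, r ≤ n - 1 → ε ≤ 1 →
      dihedralGen n (2 * r + ε)
        = ((dihedralGen n 0 * dihedralGen n 1) ^ r)⁻¹ * dihedralGen n ε *
            (dihedralGen n 0 * dihedralGen n 1) ^ r) ∧
    (∀ (H : Type) (_ : Group H) (b₀ b₁ : H),
      ⁅b₀, b₁ ^ 2⁆ = 1 → ⁅b₀ ^ 2, b₁⁆ = 1 →
      ⁅b₀, (b₀ * b₁) ^ n⁆ = 1 → ⁅b₁, (b₀ * b₁) ^ n⁆ = 1 →
      ∃! φ : Rack.EnvelGroup (Quandle.Dihedral (2 * n)) →* H,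
        φ (dihedralGen n 0) = b₀ ∧ φ (dihedralGen n 1) = b₁) := by
  have h₀ : dihedralGen n 0 = envelGen 0 := by simp [dihedralGen, envelGen]
  have h₁ : dihedralGen n 1 = envelGen 1 := by simp [dihedralGen, envelGen]
  simp only [commutatorElement_eq_one_iff_commute, h₀, h₁]
  exact ⟨closure_envelGen_zero_one, (commute_envelGen_sq 1 0).symm, commute_envelGen_sq 0 1,
    commute_envelGen_pow n 0, commute_envelGen_pow n 1,
    fun r ε _ _ => dihedralGen_two_mul_add n r ε, fun H _ b₀ b₁ => existsUnique_envelGroup_hom⟩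

/-- The enveloping group of the dihedral quandle `R_{2n}` is generated by the images
`a_0, a_1` of `x_0, x_1`, with defining relations
`[a_0,a_1²] = [a_0²,a_1] = [a_0,(a_0a_1)^n] = [a_1,(a_0a_1)^n] = 1`
(defining: any group containing elements `b_0, b_1` satisfying these relations receives a
unique homomorphism sending `a_0 ↦ b_0`, `a_1 ↦ b_1`); moreover the image of `x_{2r+ε}`
(for `ε ∈ {0,1}`, `0 ≤ r ≤ n-1`) equals `(a_0a_1)^{-r} a_ε (a_0a_1)^r`. -/
theorem envelGroup_dihedral_presentation (n : ℕ) (hn : 0 < n) :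
    Subgroup.closure {dihedralGen n 0, dihedralGen n 1} = ⊤ ∧
    ⁅dihedralGen n 0, (dihedralGen n 1) ^ 2⁆ = 1 ∧
    ⁅(dihedralGen n 0) ^ 2, dihedralGen n 1⁆ = 1 ∧
    ⁅dihedralGen n 0, (dihedralGen n 0 * dihedralGen n 1) ^ n⁆ = 1 ∧
    ⁅dihedralGen n 1, (dihedralGen n 0 * dihedralGen n 1) ^ n⁆ = 1 ∧
    (∀ r ε : ℕ, r ≤ n - 1 → ε ≤ 1 →
      dihedralGen n (2 * r + ε)
        = ((dihedralGen n 0 * dihedralGen n 1) ^ r)⁻¹ * dihedralGen n ε *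
            (dihedralGen n 0 * dihedralGen n 1) ^ r) ∧
    (∀ (H : Type) (_ : Group H) (b₀ b₁ : H),
      ⁅b₀, b₁ ^ 2⁆ = 1 → ⁅b₀ ^ 2, b₁⁆ = 1 →
      ⁅b₀, (b₀ * b₁) ^ n⁆ = 1 → ⁅b₁, (b₀ * b₁) ^ n⁆ = 1 →
      ∃! φ : Rack.EnvelGroup (Quandle.Dihedral (2 * n)) →* H,
        φ (dihedralGen n 0) = b₀ ∧ φ (dihedralGen n 1) = b₁) :=
  envelGroup_dihedral_presentation_general n
end

section
/- For n ≥ 2, the quandle U(1,n) satisfies x * y_0 = x but y_0 * x ≠ y_0; consequently U(1,n) is not isomorphic to any (G,A)-quandle. -/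
/-!
The class of `(a, u)` in `Q(G, A)` is determined by `a` and the conjugate `u⁻¹ a u`, and
`(b, v) ◃ (a, u) = (a, u)` says precisely that `v⁻¹ b v` and `u⁻¹ a u` commute. This condition
is symmetric, so a fixed point of the action of `p` on `q` gives one of `q` on `p`. In `U(1, n)`
this fails: `y₀` fixes the single point `x`, but `x` moves `y₀` to `y₋₁ ≠ y₀` once `n ≥ 2`.
-/

open Quandles

namespace GA

variable {G : Type*} [Group G]

/-- The equivalence relation on `A × G`: `(a, gh) ~ (a, h)` for `g ∈ C_G(a)`,
i.e. `(a,u) ~ (b,v)` iff `a = b` and `u * v⁻¹` centralizes `a`. -/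
def rel (A : Set G) (p q : A × G) : Prop :=
  p.1 = q.1 ∧ p.2 * q.2⁻¹ ∈ Subgroup.centralizer ({(p.1 : G)} : Set G)

theorem rel_equiv (A : Set G) : Equivalence (rel A) := by
  constructor
  · intro p
    exact ⟨rfl, by simpa using (Subgroup.centralizer ({(p.1 : G)} : Set G)).one_mem⟩
  · rintro p q ⟨h1, h2⟩
    refine ⟨h1.symm, ?_⟩
    have := (Subgroup.centralizer ({(p.1 : G)} : Set G)).inv_mem h2
    simpa [h1] using this
  · rintro p q r ⟨h1, h2⟩ ⟨h1', h2'⟩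
    refine ⟨h1.trans h1', ?_⟩
    have := (Subgroup.centralizer ({(p.1 : G)} : Set G)).mul_mem h2 (by rw [h1]; exact h2')
    simpa [mul_assoc] using this

instance setoid (A : Set G) : Setoid (A × G) := ⟨rel A, rel_equiv A⟩

/-- The `(G,A)`-quandle as a set: the quotient of `A × G` by `(a,gh) ~ (a,h)`, `g ∈ C_G(a)`. -/
def Q (G : Type*) [Group G] (A : Set G) : Type _ := Quotient (setoid A)

/-- The class of `(a,u)` in `Q(G,A)`. -/
def mk {A : Set G} (a : A) (u : G) : Q G A := Quotient.mk (setoid A) (a, u)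

/-- representative-level operation `(a,u) * (b,v) = (a, u v⁻¹ b v)`,
written as a left action of `(b,v)` on `(a,u)`. -/
def pop {A : Set G} (x y : A × G) : A × G := (y.1, y.2 * x.2⁻¹ * (x.1 : G) * x.2)

/-- representative-level inverse operation `(a,u) *⁻¹ (b,v) = (a, u v⁻¹ b⁻¹ v)`. -/
def pinv {A : Set G} (x y : A × G) : A × G := (y.1, y.2 * x.2⁻¹ * (x.1 : G)⁻¹ * x.2)

theorem centralizer_mem_iff {a u : G} : u ∈ Subgroup.centralizer ({a} : Set G) ↔ u * a = a * u := by
  rw [Subgroup.mem_centralizer_singleton_iff]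

theorem conj_indep {b v d : G} (h : d * b = b * d) : ((d * v))⁻¹ * b * (d * v) = v⁻¹ * b * v := by
  have h' : d⁻¹ * b * d = b := by
    rw [mul_assoc, ← h]; group
  calc (d * v)⁻¹ * b * (d * v) = v⁻¹ * (d⁻¹ * b * d) * v := by group
    _ = v⁻¹ * b * v := by rw [h']

theorem pop_well {A : Set G} : ∀ (x₁ y₁ x₂ y₂ : A × G), rel A x₁ x₂ → rel A y₁ y₂ →
    rel A (pop x₁ y₁) (pop x₂ y₂) := by
  rintro ⟨b₁, v₁⟩ ⟨a₁, u₁⟩ ⟨b₂, v₂⟩ ⟨a₂, u₂⟩ ⟨hb, hv⟩ ⟨ha, hu⟩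
  refine ⟨ha, ?_⟩
  simp only [pop]
  rw [centralizer_mem_iff] at hv hu ⊢
  have hb' : (b₁ : G) = (b₂ : G) := congrArg _ hb
  have key : v₁⁻¹ * (b₁ : G) * v₁ = v₂⁻¹ * (b₂ : G) * v₂ := by
    conv_lhs => rw [show v₁ = (v₁ * v₂⁻¹) * v₂ by group, hb']
    exact conj_indep (by rw [← hb']; exact hv)
  have heq : u₁ * v₁⁻¹ * (b₁:G) * v₁ * (u₂ * v₂⁻¹ * (b₂:G) * v₂)⁻¹ = u₁ * u₂⁻¹ := by
    calc u₁ * v₁⁻¹ * (b₁:G) * v₁ * (u₂ * v₂⁻¹ * (b₂:G) * v₂)⁻¹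
        = u₁ * (v₁⁻¹ * (b₁:G) * v₁) * (v₂⁻¹ * (b₂:G) * v₂)⁻¹ * u₂⁻¹ := by group
      _ = u₁ * (v₂⁻¹ * (b₂:G) * v₂) * (v₂⁻¹ * (b₂:G) * v₂)⁻¹ * u₂⁻¹ := by rw [key]
      _ = u₁ * u₂⁻¹ := by group
  rw [heq]
  exact hu

theorem pinv_well {A : Set G} : ∀ (x₁ y₁ x₂ y₂ : A × G), rel A x₁ x₂ → rel A y₁ y₂ →
    rel A (pinv x₁ y₁) (pinv x₂ y₂) := by
  rintro ⟨b₁, v₁⟩ ⟨a₁, u₁⟩ ⟨b₂, v₂⟩ ⟨a₂, u₂⟩ ⟨hb, hv⟩ ⟨ha, hu⟩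
  refine ⟨ha, ?_⟩
  simp only [pinv]
  rw [centralizer_mem_iff] at hv hu ⊢
  have hb' : (b₁ : G) = (b₂ : G) := congrArg _ hb
  have hvc : (v₁ * v₂⁻¹) * (b₂ : G)⁻¹ = (b₂ : G)⁻¹ * (v₁ * v₂⁻¹) := by
    have : Commute (v₁ * v₂⁻¹) (b₂ : G) := by rw [← hb']; exact hv
    exact this.inv_right
  have key : v₁⁻¹ * (b₁ : G)⁻¹ * v₁ = v₂⁻¹ * (b₂ : G)⁻¹ * v₂ := by
    conv_lhs => rw [show v₁ = (v₁ * v₂⁻¹) * v₂ by group, hb']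
    exact conj_indep hvc
  have heq : u₁ * v₁⁻¹ * (b₁:G)⁻¹ * v₁ * (u₂ * v₂⁻¹ * (b₂:G)⁻¹ * v₂)⁻¹ = u₁ * u₂⁻¹ := by
    calc u₁ * v₁⁻¹ * (b₁:G)⁻¹ * v₁ * (u₂ * v₂⁻¹ * (b₂:G)⁻¹ * v₂)⁻¹
        = u₁ * (v₁⁻¹ * (b₁:G)⁻¹ * v₁) * (v₂⁻¹ * (b₂:G)⁻¹ * v₂)⁻¹ * u₂⁻¹ := by group
      _ = u₁ * (v₂⁻¹ * (b₂:G)⁻¹ * v₂) * (v₂⁻¹ * (b₂:G)⁻¹ * v₂)⁻¹ * u₂⁻¹ := by rw [key]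
      _ = u₁ * u₂⁻¹ := by group
  rw [heq]
  exact hu

instance quandle (G : Type*) [Group G] (A : Set G) : Quandle (Q G A) where
  act := Quotient.map₂ pinv (fun _ _ h _ _ h' => pinv_well _ _ _ _ h h')
  invAct := Quotient.map₂ pop (fun _ _ h _ _ h' => pop_well _ _ _ _ h h')
  self_distrib := by
    rintro ⟨⟨b,v⟩⟩ ⟨⟨c,w⟩⟩ ⟨⟨a,u⟩⟩
    refine Quotient.sound ⟨rfl, ?_⟩
    simp only [pinv]
    rw [centralizer_mem_iff]
    group
  left_inv := by
    rintro ⟨⟨b,v⟩⟩ ⟨⟨a,u⟩⟩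
    refine Quotient.sound ⟨rfl, ?_⟩
    simp only [pop, pinv]
    rw [centralizer_mem_iff]
    group
  right_inv := by
    rintro ⟨⟨b,v⟩⟩ ⟨⟨a,u⟩⟩
    refine Quotient.sound ⟨rfl, ?_⟩
    simp only [pop, pinv]
    rw [centralizer_mem_iff]
    group
  fix := by
    rintro ⟨⟨a,u⟩⟩
    refine Quotient.sound ⟨rfl, ?_⟩
    simp only [pinv]
    rw [centralizer_mem_iff]
    have : (u * u⁻¹ * (a:G)⁻¹ * u) * u⁻¹ = (a : G)⁻¹ := by group
    rw [this]
    group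

@[simp] theorem invAct_mk {A : Set G} (a b : A) (u v : G) :
    Rack.invAct (mk b v) (mk a u) = mk a (u * v⁻¹ * (b : G) * v) := rfl

@[simp] theorem act_mk {A : Set G} (a b : A) (u v : G) :
    Shelf.act (mk b v) (mk a u) = mk a (u * v⁻¹ * (b : G)⁻¹ * v) := rfl

end GA
open Quandles

/-- The underlying set of the quandle `U(n,m)`: elements `x_i` (`i ∈ ZMod n`)
and `y_r` (`r ∈ ZMod m`). -/
def UQ (n m : ℕ) : Type := ZMod n ⊕ ZMod m

namespace UQ

/-- The quandle operation of `U(n,m)` (as the inverse action `z ◃⁻¹ w = w * z` of the paper):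
`x_i * x_j = x_i`, `x_i * y_r = x_{i+1}`, `y_r * y_s = y_r`, `y_r * x_i = y_{r+1}`. -/
def op {n m : ℕ} (x y : UQ n m) : UQ n m :=
  match x, y with
  | Sum.inl _, Sum.inl i => Sum.inl i
  | Sum.inl _, Sum.inr r => Sum.inr (r + 1)
  | Sum.inr _, Sum.inl i => Sum.inl (i + 1)
  | Sum.inr _, Sum.inr r => Sum.inr r

/-- The inverse operation. -/
def opInv {n m : ℕ} (x y : UQ n m) : UQ n m :=
  match x, y with
  | Sum.inl _, Sum.inl i => Sum.inl i
  | Sum.inl _, Sum.inr r => Sum.inr (r - 1)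
  | Sum.inr _, Sum.inl i => Sum.inl (i - 1)
  | Sum.inr _, Sum.inr r => Sum.inr r

instance quandle (n m : ℕ) : Quandle (UQ n m) where
  act := opInv
  invAct := op
  self_distrib := by
    rintro (a | a) (b | b) (c | c) <;> simp [op, opInv] <;> rfl
  left_inv := by
    rintro (a | a) (b | b) <;> simp [op, opInv] <;> rfl
  right_inv := by
    rintro (a | a) (b | b) <;> simp [op, opInv] <;> rfl
  fix := by
    rintro (a | a) <;> simp [op, opInv] <;> rfl

/-- The element `x_i` of `U(n,m)`. -/
def x {n m : ℕ} (i : ZMod n) : UQ n m := Sum.inl i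

/-- The element `y_r` of `U(n,m)`. -/
def y {n m : ℕ} (r : ZMod m) : UQ n m := Sum.inr r

end UQ

def Shelf.ActFixSymmetric (S : Type*) [Shelf S] : Prop :=
  ∀ p q : S, p ◃ q = q → q ◃ p = p

theorem Shelf.ActFixSymmetric.of_injective {R S : Type*} [Shelf R] [Shelf S] {f : R → S}
    (hf : Function.Injective f) (hact : ∀ a b : R, f (a ◃ b) = f a ◃ f b)
    (hS : Shelf.ActFixSymmetric S) : Shelf.ActFixSymmetric R := fun p q hpq =>
  hf <| by rw [hact, hS _ _ (by rw [← hact, hpq])]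

namespace GA

variable {G : Type*} [Group G] {A : Set G}

theorem mk_eq_mk_iff (a : A) (u u' : G) :
    mk a u = mk a u' ↔ Commute (u * u'⁻¹) (a : G) :=
  Quotient.eq.trans <| (and_iff_right rfl).trans Subgroup.mem_centralizer_singleton_iff

theorem act_mk_eq_self_iff (a b : A) (u v : G) :
    mk b v ◃ mk a u = mk a u ↔ Commute (v⁻¹ * b * v) (u⁻¹ * a * u) := by
  rw [act_mk, mk_eq_mk_iff]
  refine Iff.trans ?_ ((Commute.conj_iff u).trans Commute.inv_left_iff)
  congr! 1 <;> group

theorem actFixSymmetric : Shelf.ActFixSymmetric (Q G A) := by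
  rintro ⟨⟨b, v⟩⟩ ⟨⟨a, u⟩⟩ h
  exact (act_mk_eq_self_iff b a v u).2 ((act_mk_eq_self_iff a b u v).1 h).symm

end GA

namespace UQ

variable {n m : ℕ}

@[simp] theorem invAct_y_x (r : ZMod m) (i : ZMod n) : (y r ◃⁻¹ x i : UQ n m) = x (i + 1) := rfl

@[simp] theorem invAct_x_y (i : ZMod n) (r : ZMod m) : (x i ◃⁻¹ y r : UQ n m) = y (r + 1) := rfl

@[simp] theorem act_y_x (r : ZMod m) (i : ZMod n) : (y r ◃ x i : UQ n m) = x (i - 1) := rfl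

@[simp] theorem act_x_y (i : ZMod n) (r : ZMod m) : (x i ◃ y r : UQ n m) = y (r - 1) := rfl

theorem y_injective : Function.Injective (y : ZMod m → UQ n m) := Sum.inr_injective

theorem y_add_ne (hm : 2 ≤ m) (r : ZMod m) : (y (r + 1) : UQ n m) ≠ y r := by
  have : Fact (1 < m) := ⟨hm⟩
  exact y_injective.ne (by simp)

theorem not_actFixSymmetric (hm : 2 ≤ m) : ¬ Shelf.ActFixSymmetric (UQ 1 m) := by
  intro h
  have hxy : (y 0 ◃ x 0 : UQ 1 m) = x 0 := by rw [act_y_x, Subsingleton.elim (0 - 1 : ZMod 1) 0]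
  have hyx : (x 0 ◃ y 0 : UQ 1 m) = y 0 := h _ _ hxy
  rw [act_x_y] at hyx
  exact y_add_ne hm (0 - 1) (by rw [sub_add_cancel, hyx])

end UQ

/-- The paper's quandle operation `a * b` is `Rack.invAct b a` in this encoding. -/
theorem U1n_not_GA (n : ℕ) (hn : 2 ≤ n) :
    Rack.invAct (UQ.y 0 : UQ 1 n) (UQ.x 0) = UQ.x 0 ∧
    Rack.invAct (UQ.x 0 : UQ 1 n) (UQ.y 0) ≠ UQ.y 0 ∧
    ∀ (G : Type*) (_ : Group G) (A : Set G),
      ¬∃ f : UQ 1 n ≃ GA.Q G A,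
        (∀ a b : UQ 1 n, f (Shelf.act a b) = Shelf.act (f a) (f b)) := by
  refine ⟨?_, ?_, ?_⟩
  · rw [UQ.invAct_y_x, Subsingleton.elim (0 + 1 : ZMod 1) 0]
  · rw [UQ.invAct_x_y]
    exact UQ.y_add_ne hn 0
  · rintro G _ A ⟨f, hf⟩
    exact UQ.not_actFixSymmetric hn (GA.actFixSymmetric.of_injective f.injective hf)
end
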